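/- arXiv:0712.3736 — 2 statements merged into one kernel-verified Lean document; each statement's English description precedes it below -/
import Mathlib

section
/- Let P be a finite subset of the Euclidean plane ℝ² with at least 3 points. Then all points of P lie on a common circle (there exist c ∈ ℝ² and r > 0 with dist p c = r for all p ∈ P) if and only if the Voronoi vertex set 𝒱(P) has exactly one element; moreover, in that case 𝒱(P) = {c} where c is the common center, and 𝒱^[n](P) = ∅ for all n > 1. -/
open Set

abbrev Plane : Type := EuclideanSpace ℝ (Fin 2)

/-- The Voronoi cell of a generator `p` for a generating set `P`. -/
def cell (P : Set Plane) (p : Plane) : Set Plane :=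
  {x : Plane | ∀ q ∈ P, dist x p ≤ dist x q}

/-- The set of nearest generators of `x` in `P`. -/
def nearest (P : Set Plane) (x : Plane) : Set Plane :=
  {p ∈ P | ∀ q ∈ P, dist x p ≤ dist x q}

/-- The Voronoi vertex set: points with at least 3 nearest generators. -/
def vtx (P : Set Plane) : Set Plane :=
  {x : Plane | 3 ≤ (nearest P x).encard}

/-- The boundary of a point set: its points on the frontier of its convex hull. -/
def Bd (S : Set Plane) : Set Plane :=
  S ∩ frontier (convexHull ℝ S)

/-- The number of instances of cocircularity. -/
noncomputable def Ic (P : Set Plane) : ℤ :=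
  ∑ᶠ x ∈ vtx P, (((nearest P x).ncard : ℤ) - 3)

open RealInnerProductSpace Module

/-!
If `P` lies on a circle about `c`, a Voronoi vertex is equidistant from three points of that
circle, so it is `c` (two distinct circles meet in at most two points); then `vtx P = {c}` and
`vtx (vtx P) = vtx {c} = ∅`.

Conversely, let `x` be a Voronoi vertex and `q ∈ P` a point outside its empty circle. Move the
centre from `x` towards `q`, keeping on the circle the point `a` of the circle that is extreme in
that direction: the circle stays empty until it meets a new point `p₁`. Then move the centre
along the bisector of `a p₁`, towards a side on which the first circle has a point (three points
of a circle are never collinear), until it meets a third point `p₂`. The centre reached is a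
Voronoi vertex other than `x`, since `p₁` is among its nearest points.
-/

theorem Set.three_le_encard_iff {α : Type*} {s : Set α} :
    3 ≤ s.encard ↔ ∃ a b c, a ∈ s ∧ b ∈ s ∧ c ∈ s ∧ a ≠ b ∧ a ≠ c ∧ b ≠ c := by
  constructor
  · intro h
    obtain ⟨t, hts, ht⟩ := exists_subset_encard_eq h
    obtain ⟨a, b, c, hab, hac, hbc, rfl⟩ := encard_eq_three.mp ht
    exact ⟨a, b, c, hts (by simp), hts (by simp), hts (by simp), hab, hac, hbc⟩
  · rintro ⟨a, b, c, ha, hb, hc, hab, hac, hbc⟩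
    calc (3 : ℕ∞) = ({a, b, c} : Set α).encard :=
          (encard_eq_three.mpr ⟨a, b, c, hab, hac, hbc, rfl⟩).symm
      _ ≤ s.encard :=
          encard_le_encard (insert_subset ha (insert_subset hb (singleton_subset_iff.mpr hc)))

section InnerProductSpace

variable {V : Type*} [NormedAddCommGroup V] [InnerProductSpace ℝ V]

theorem collinear_of_inner_sub_eq_zero [FiniteDimensional ℝ V] (hV : finrank ℝ V = 2)
    {v a : V} (hv : v ≠ 0) {s : Set V} (hs : ∀ p ∈ s, ⟪v, p - a⟫ = 0) : Collinear ℝ s := by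
  have hle : vectorSpan ℝ s ≤ (ℝ ∙ v)ᗮ := by
    rw [vectorSpan_def, Submodule.span_le]
    rintro _ ⟨p, hp, q, hq, rfl⟩
    rw [SetLike.mem_coe, Submodule.mem_orthogonal_singleton_iff_inner_right]
    simp only [vsub_eq_sub]
    rw [show p - q = (p - a) - (q - a) by abel, inner_sub_right, hs p hp, hs q hq, sub_zero]
  have : Fact (finrank ℝ V = 1 + 1) := ⟨hV⟩
  rw [collinear_iff_finrank_le_one]
  exact (Submodule.finrank_mono hle).trans (Submodule.finrank_orthogonal_span_singleton hv).le

theorem not_collinear_of_dist_eq {s : Set V} {c : V} {r : ℝ} (hs : ∀ p ∈ s, dist p c = r)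
    {a b d : V} (ha : a ∈ s) (hb : b ∈ s) (hd : d ∈ s) (hab : a ≠ b) (had : a ≠ d)
    (hbd : b ≠ d) : ¬ Collinear ℝ s := fun hcol =>
  affineIndependent_iff_not_collinear_set.mp
    (EuclideanGeometry.Cospherical.affineIndependent_of_mem_of_ne ⟨c, r, hs⟩ ha hb hd
      hab had hbd)
    (hcol.subset (insert_subset ha (insert_subset hb (singleton_subset_iff.mpr hd))))

theorem exists_inner_eq_zero_and_pos_of_not_collinear [FiniteDimensional ℝ V]
    (hV : finrank ℝ V = 2) {s : Set V} (hs : ¬ Collinear ℝ s) (e a : V) :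
    ∃ v : V, ⟪v, e⟫ = 0 ∧ ∃ u ∈ s, 0 < ⟪v, u - a⟫ := by
  obtain ⟨v, hve, hv⟩ : ∃ v ∈ (ℝ ∙ e)ᗮ, v ≠ 0 := by
    refine Submodule.exists_mem_ne_zero_of_ne_bot fun hbot => ?_
    have hspan := finrank_span_le_card (R := ℝ) ({e} : Set V)
    rw [Submodule.orthogonal_eq_bot_iff.mp hbot, finrank_top, hV] at hspan
    simp at hspan
  rw [Submodule.mem_orthogonal_singleton_iff_inner_left] at hve
  obtain ⟨u, hu, hvu⟩ : ∃ u ∈ s, ⟪v, u - a⟫ ≠ 0 := by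
    by_contra! h
    exact hs (collinear_of_inner_sub_eq_zero hV hv h)
  rcases hvu.lt_or_gt with hneg | hpos
  · exact ⟨-v, by rw [inner_neg_left, hve, neg_zero], u, hu, by rw [inner_neg_left]; linarith⟩
  · exact ⟨v, hve, u, hu, hpos⟩

theorem inner_sub_sub_pos_of_dist_lt {x a q : V} (h : dist a x < dist q x) :
    0 < ⟪q - x, q - a⟫ := by
  rw [dist_eq_norm, dist_eq_norm] at h
  have hcs := real_inner_le_norm (q - x) (a - x)
  calc 0 < ‖q - x‖ * (‖q - x‖ - ‖a - x‖) := mul_pos ((norm_nonneg _).trans_lt h) (by linarith)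
    _ ≤ ⟪q - x, q - x⟫ - ⟪q - x, a - x⟫ := by rw [real_inner_self_eq_norm_mul_norm]; nlinarith
    _ = ⟪q - x, q - a⟫ := by rw [← inner_sub_right, sub_sub_sub_cancel_right]

theorem dist_add_smul_sq_sub_dist_add_smul_sq (y v p a : V) (t : ℝ) :
    dist (y + t • v) p ^ 2 - dist (y + t • v) a ^ 2
      = dist y p ^ 2 - dist y a ^ 2 - 2 * t * ⟪v, p - a⟫ := by
  simp only [dist_eq_norm, add_sub_right_comm y, norm_add_sq_real, real_inner_smul_right,
    inner_sub_right, inner_sub_left, real_inner_comm v]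
  ring

end InnerProductSpace

section Voronoi

variable {P : Set Plane} {x y a p : Plane}

theorem mem_vtx_iff : x ∈ vtx P ↔ ∃ a b c, a ∈ nearest P x ∧ b ∈ nearest P x ∧
    c ∈ nearest P x ∧ a ≠ b ∧ a ≠ c ∧ b ≠ c :=
  three_le_encard_iff

theorem vtx_eq_empty_of_encard_lt_three (h : P.encard < 3) : vtx P = ∅ :=
  eq_empty_of_forall_notMem fun _ hx =>
    (hx.trans (encard_le_encard fun _ hp => hp.1)).not_gt h

theorem dist_eq_of_mem_nearest (ha : a ∈ nearest P y) (hp : p ∈ nearest P y) :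
    dist y p = dist y a :=
  le_antisymm (hp.2 a ha.1) (ha.2 p hp.1)

theorem mem_nearest_of_dist_eq (ha : a ∈ nearest P y) (hp : p ∈ P)
    (h : dist y p = dist y a) : p ∈ nearest P y :=
  ⟨hp, fun q hq => h ▸ ha.2 q hq⟩

theorem dist_lt_of_notMem_nearest (ha : a ∈ nearest P y) (hp : p ∈ P)
    (hpn : p ∉ nearest P y) : dist y a < dist y p :=
  lt_of_le_of_ne (ha.2 p hp) fun h => hpn (mem_nearest_of_dist_eq ha hp h.symm)

theorem vtx_eq_singleton_of_dist_eq (h3 : 3 ≤ P.encard) {c : Plane} {r : ℝ}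
    (hc : ∀ p ∈ P, dist p c = r) : vtx P = {c} := by
  ext z
  constructor
  · intro hz
    obtain ⟨a, b, d, ha, hb, hd, hab, had, hbd⟩ := mem_vtx_iff.mp hz
    by_contra hzc
    have hdist : ∀ p ∈ nearest P z, dist p z = dist a z := fun p hp => by
      rw [dist_comm, dist_comm a, dist_eq_of_mem_nearest ha hp]
    rcases EuclideanGeometry.eq_of_dist_eq_of_dist_eq_of_finrank_eq_two finrank_euclideanSpace_fin
      hzc hab rfl (hdist b hb) (hdist d hd) (hc a ha.1) (hc b hb.1) (hc d hd.1) with h | h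
    · exact had h.symm
    · exact hbd h.symm
  · rintro rfl
    have hall : nearest P z = P :=
      subset_antisymm (fun _ hp => hp.1) fun p hp => ⟨hp, fun q hq => by
        rw [dist_comm, dist_comm z q, hc p hp, hc q hq]⟩
    change 3 ≤ (nearest P z).encard
    rwa [hall]

theorem exists_mem_nearest_add_smul (hP : P.Finite) {v : Plane} (ha : a ∈ nearest P y)
    (hS : ∃ p ∈ P, 0 < ⟪v, p - a⟫) :
    ∃ t : ℝ, ∃ p' ∈ P, 0 < ⟪v, p' - a⟫ ∧ a ∈ nearest P (y + t • v) ∧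
      p' ∈ nearest P (y + t • v) ∧
      ∀ p ∈ nearest P y, ⟪v, p - a⟫ = 0 → p ∈ nearest P (y + t • v) := by
  set S := {p ∈ P | 0 < ⟪v, p - a⟫}
  set g : Plane → ℝ := fun p => dist y p ^ 2 - dist y a ^ 2
  have hg : ∀ p ∈ P, 0 ≤ g p := fun p hp =>
    sub_nonneg.mpr (pow_le_pow_left₀ dist_nonneg (ha.2 p hp) 2)
  obtain ⟨p', hp'S, hp'min⟩ := Set.exists_min_image S (fun p => g p / (2 * ⟪v, p - a⟫))
    (hP.subset fun _ hp => hp.1) hS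
  -- by `dist_add_smul_sq_sub_dist_add_smul_sq`, the first time at which a point `p` with
  -- `0 < ⟪v, p - a⟫` is as near to `y + t • v` as `a` is
  set t := g p' / (2 * ⟪v, p' - a⟫)
  have ht : 0 ≤ t := div_nonneg (hg p' hp'S.1) (by linarith [hp'S.2])
  have hmove := fun p => dist_add_smul_sq_sub_dist_add_smul_sq y v p a t
  have ha' : a ∈ nearest P (y + t • v) := by
    refine ⟨ha.1, fun p hp => (sq_le_sq₀ dist_nonneg dist_nonneg).mp ?_⟩
    suffices 2 * t * ⟪v, p - a⟫ ≤ g p by linarith [hmove p]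
    rcases le_or_gt ⟪v, p - a⟫ 0 with hneg | hpos
    · nlinarith [hg p hp]
    · have := (le_div_iff₀ (by linarith)).mp (hp'min p ⟨hp, hpos⟩)
      linarith
  refine ⟨t, p', hp'S.1, hp'S.2, ha', mem_nearest_of_dist_eq ha' hp'S.1 ?_, fun p hp h0 => ?_⟩
  · have hp't : 2 * t * ⟪v, p' - a⟫ = g p' := by
      rw [mul_comm 2 t, mul_assoc]
      exact div_mul_cancel₀ _ (by linarith [hp'S.2])
    refine (sq_eq_sq₀ dist_nonneg dist_nonneg).mp ?_
    linarith [hmove p']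
  · refine mem_nearest_of_dist_eq ha' hp.1 ((sq_eq_sq₀ dist_nonneg dist_nonneg).mp ?_)
    rw [← sub_eq_zero, hmove p, h0, mul_zero, sub_zero, dist_eq_of_mem_nearest ha hp, sub_self]

theorem exists_mem_vtx_ne (hP : P.Finite) (hx : x ∈ vtx P) {q : Plane} (hq : q ∈ P)
    (hqx : q ∉ nearest P x) : ∃ z ∈ vtx P, z ≠ x := by
  obtain ⟨a₀, b₀, c₀, ha₀, hb₀, hc₀, hab₀, hac₀, hbc₀⟩ := mem_vtx_iff.mp hx
  obtain ⟨a, ha, hamax⟩ := Set.exists_max_image (nearest P x) (fun p => ⟪q - x, p⟫)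
    (hP.subset fun _ hp => hp.1) ⟨a₀, ha₀⟩
  have hqa : 0 < ⟪q - x, q - a⟫ := by
    refine inner_sub_sub_pos_of_dist_lt ?_
    simpa only [dist_comm] using dist_lt_of_notMem_nearest ha hq hqx
  obtain ⟨t₁, p₁, hp₁, hp₁pos, hay, hp₁y, -⟩ := exists_mem_nearest_add_smul hP ha ⟨q, hq, hqa⟩
  have hp₁x : p₁ ∉ nearest P x := fun h => by
    have := hamax p₁ h
    rw [inner_sub_right] at hp₁pos
    linarith
  have hp₁a : p₁ ≠ a := fun h => hp₁x (h ▸ ha)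
  have hNx : ¬ Collinear ℝ (nearest P x) :=
    not_collinear_of_dist_eq (fun p hp => by rw [dist_comm, dist_eq_of_mem_nearest ha₀ hp])
      ha₀ hb₀ hc₀ hab₀ hac₀ hbc₀
  obtain ⟨v, hv, u, hu, hua⟩ :=
    exists_inner_eq_zero_and_pos_of_not_collinear finrank_euclideanSpace_fin hNx (p₁ - a) a
  obtain ⟨t₂, p₂, hp₂, hp₂pos, haz, hp₂z, hkeep⟩ :=
    exists_mem_nearest_add_smul hP hay ⟨u, hu.1, hua⟩
  have hp₁z := hkeep p₁ hp₁y hv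
  refine ⟨_, mem_vtx_iff.mpr ⟨a, p₁, p₂, haz, hp₁z, hp₂z, hp₁a.symm, ?_, ?_⟩,
    fun h => hp₁x (h ▸ hp₁z)⟩
  · rintro rfl
    simp at hp₂pos
  · rintro rfl
    exact hp₂pos.ne' hv

theorem exists_dist_eq_of_vtx_eq_singleton (hP : P.Finite) (hx : vtx P = {x}) :
    ∃ r : ℝ, 0 < r ∧ ∀ p ∈ P, dist p x = r := by
  have hxv : x ∈ vtx P := hx ▸ mem_singleton x
  have hall : ∀ p ∈ P, p ∈ nearest P x := fun p hp => by
    by_contra hpx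
    obtain ⟨z, hz, hzx⟩ := exists_mem_vtx_ne hP hxv hp hpx
    exact hzx (mem_singleton_iff.mp (hx ▸ hz))
  obtain ⟨a, b, -, ha, hb, -, hab, -, -⟩ := mem_vtx_iff.mp hxv
  refine ⟨dist a x, dist_pos.mpr fun hax => hab ?_, fun p hp => ?_⟩
  · have hbx : dist x b = dist x a := dist_eq_of_mem_nearest ha hb
    rw [hax, dist_self, dist_eq_zero] at hbx
    exact hax.trans hbx
  · rw [dist_comm, dist_eq_of_mem_nearest ha (hall p hp), dist_comm]

end Voronoi

theorem cocircular_iff_vtx_singleton (P : Set Plane) (hP : P.Finite)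
    (h3 : 3 ≤ P.ncard) :
    ((∃ c : Plane, ∃ r : ℝ, 0 < r ∧ ∀ p ∈ P, dist p c = r) ↔ (vtx P).ncard = 1) ∧
    (∀ c : Plane, ∀ r : ℝ, 0 < r → (∀ p ∈ P, dist p c = r) → vtx P = {c}) ∧
    ((∃ c : Plane, ∃ r : ℝ, 0 < r ∧ ∀ p ∈ P, dist p c = r) →
      ∀ n : ℕ, 1 < n → vtx^[n] P = ∅) := by
  have h3' : 3 ≤ P.encard := by rw [← hP.cast_ncard_eq]; exact_mod_cast h3
  refine ⟨⟨fun ⟨c, r, _, hc⟩ => ?_, fun h => ?_⟩, fun c r _ => vtx_eq_singleton_of_dist_eq h3', ?_⟩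
  · rw [vtx_eq_singleton_of_dist_eq h3' hc, ncard_singleton]
  · obtain ⟨x, hx⟩ := ncard_eq_one.mp h
    exact ⟨x, exists_dist_eq_of_vtx_eq_singleton hP hx⟩
  · rintro ⟨c, r, -, hc⟩ n hn
    obtain ⟨k, rfl⟩ : ∃ k, n = k + 2 := ⟨n - 2, by omega⟩
    change vtx^[k] (vtx (vtx P)) = ∅
    rw [vtx_eq_singleton_of_dist_eq h3' hc, vtx_eq_empty_of_encard_lt_three (by simp),
      Function.iterate_fixed (vtx_eq_empty_of_encard_lt_three (by simp))]
end

section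
/- Let P be a finite subset of the Euclidean plane ℝ² with P.ncard < 5. Then there exists n ≥ 1 such that 𝒱^[n](P) = ∅. -/
open Set

/-! A Voronoi vertex is the centre of a circle through at least three generators, and in the plane
three points have only one circumcentre, so distinct vertices share at most two nearest generators.
Hence two generators have no vertex and three have at most one. With four generators and at least
two vertices, each vertex misses exactly one generator, distinct vertices missing distinct ones.
Four vertices `x i` would then be the centres of circles through all generators but `q i`, with
`q i` strictly outside; a positive combination of the power functions of these circles is constant
on the `q j`, which makes all four generators concyclic, so their common centre would be a vertex
nearest to all of them and every vertex would coincide with it. Thus `|𝒱 P| ≤ 3`, `|𝒱² P| ≤ 1` and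
`𝒱³ P = ∅`. -/

open RealInnerProductSpace Module EuclideanGeometry

section InnerProductSpace

variable {E : Type*} [NormedAddCommGroup E] [InnerProductSpace ℝ E]

theorem sum_mul_dist_sq_eq_of_smul_eq_sum {ι : Type*} (s : Finset ι) (w : ι → ℝ) (x : ι → E)
    {o : E} (ho : (∑ i ∈ s, w i) • o = ∑ i ∈ s, w i • x i) (y : E) :
    ∑ i ∈ s, w i * dist y (x i) ^ 2 =
      (∑ i ∈ s, w i) * dist y o ^ 2 + ∑ i ∈ s, w i * dist o (x i) ^ 2 := by
  have hbar : ∑ i ∈ s, w i • (o - x i) = 0 := by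
    simp only [smul_sub, Finset.sum_sub_distrib, ← Finset.sum_smul, ho, sub_self]
  have hsplit : ∀ i,
      dist y (x i) ^ 2 = dist y o ^ 2 + 2 * ⟪y - o, o - x i⟫ + dist o (x i) ^ 2 := by
    intro i
    rw [dist_eq_norm, dist_eq_norm, dist_eq_norm, ← norm_add_sq_real, sub_add_sub_cancel]
  have hcross : ∑ i ∈ s, w i * ⟪y - o, o - x i⟫ = 0 := by
    simp only [← real_inner_smul_right, ← inner_sum, hbar, inner_zero_right]
  simp only [hsplit, mul_add, Finset.sum_add_distrib, ← Finset.sum_mul, mul_left_comm (w _) 2,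
    ← Finset.mul_sum, hcross, mul_zero, add_zero]

theorem cospherical_range_of_dist_sq_eq_of_ne {ι : Type*} [Finite ι] (x q : ι → E) (r : ι → ℝ)
    (hoff : ∀ i j, i ≠ j → dist (x i) (q j) ^ 2 = r i) (hdiag : ∀ i, r i < dist (x i) (q i) ^ 2) :
    Cospherical (range q) := by
  cases nonempty_fintype ι
  -- `u i` is the reciprocal of the power of `q i` with respect to the circle `(x i, √(r i))`, so
  -- the `u`-weighted sum of powers is `1` at every `q j`; by the parallel axis theorem it is also
  -- `W * dist · o ^ 2` plus a constant.
  set u : ι → ℝ := fun i => (dist (x i) (q i) ^ 2 - r i)⁻¹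
  set W := ∑ i, u i
  set o : E := W⁻¹ • ∑ i, u i • x i
  have hu : ∀ i, 0 < u i := fun i => inv_pos.2 (sub_pos.2 (hdiag i))
  have hpow : ∀ j, ∑ i, u i * (dist (q j) (x i) ^ 2 - r i) = 1 := by
    intro j
    rw [Finset.sum_eq_single j (fun i _ hij => by rw [dist_comm, hoff i j hij, sub_self, mul_zero])
      (by simp), dist_comm]
    exact inv_mul_cancel₀ (sub_pos.2 (hdiag j)).ne'
  set c := ∑ i, u i * dist o (x i) ^ 2 - ∑ i, u i * r i
  refine ⟨o, √((1 - c) / W), ?_⟩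
  rintro _ ⟨j, rfl⟩
  have hW : 0 < W := Finset.sum_pos (fun i _ => hu i) ⟨j, Finset.mem_univ j⟩
  have hbar := sum_mul_dist_sq_eq_of_smul_eq_sum Finset.univ u x (smul_inv_smul₀ hW.ne' _) (q j)
  have hj : W * dist (q j) o ^ 2 + c = 1 := by
    simp only [mul_sub, Finset.sum_sub_distrib] at hpow
    linarith [hpow j]
  rw [← hj, add_sub_cancel_right, mul_div_cancel_left₀ _ hW.ne', Real.sqrt_sq dist_nonneg]

end InnerProductSpace

section EuclideanPlane

variable {V P : Type*} [NormedAddCommGroup V] [InnerProductSpace ℝ V] [MetricSpace P]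
  [NormedAddTorsor V P]

theorem eq_of_forall_dist_eq_of_three_le_encard [FiniteDimensional ℝ V] (hd : finrank ℝ V = 2)
    {t : Set P} (ht : 3 ≤ t.encard) {c₁ c₂ : P} {r₁ r₂ : ℝ} (h₁ : ∀ p ∈ t, dist p c₁ = r₁)
    (h₂ : ∀ p ∈ t, dist p c₂ = r₂) : c₁ = c₂ := by
  by_contra hc
  obtain ⟨t', ht't, ht'⟩ := exists_subset_encard_eq ht
  obtain ⟨a, b, c, hab, hac, hbc, rfl⟩ := encard_eq_three.1 ht'
  have hmem : a ∈ t ∧ b ∈ t ∧ c ∈ t := ⟨ht't (by simp), ht't (by simp), ht't (by simp)⟩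
  rcases eq_of_dist_eq_of_dist_eq_of_finrank_eq_two hd hc hab (h₁ a hmem.1) (h₁ b hmem.2.1)
    (h₁ c hmem.2.2) (h₂ a hmem.1) (h₂ b hmem.2.1) (h₂ c hmem.2.2) with h | h
  exacts [hac h.symm, hbc h.symm]

end EuclideanPlane

section Voronoi

variable {S : Set Plane} {x y p q : Plane}

lemma nearest_subset (S : Set Plane) (x : Plane) : nearest S x ⊆ S := fun _ hp => hp.1

lemma dist_eq_of_mem_nearest_s5 (hp : p ∈ nearest S x) (hq : q ∈ nearest S x) :
    dist x p = dist x q :=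
  le_antisymm (hp.2 q hq.1) (hq.2 p hp.1)

lemma dist_eq_infDist_of_mem_nearest (hp : p ∈ nearest S x) : dist x p = Metric.infDist x S :=
  le_antisymm (Metric.le_infDist ⟨p, hp.1⟩ |>.2 hp.2) (Metric.infDist_le_dist_of_mem hp.1)

lemma infDist_lt_dist_of_mem_diff_nearest (hp : p ∈ S \ nearest S x) :
    Metric.infDist x S < dist x p := by
  obtain ⟨q, hq, hqp⟩ : ∃ q ∈ S, dist x q < dist x p := by
    simpa [nearest, hp.1] using hp.2
  exact (Metric.infDist_le_dist_of_mem hq).trans_lt hqp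

lemma nearest_subset_nearest_of_forall_dist_eq {R : ℝ} (h : ∀ p ∈ S, dist p y = R) :
    nearest S x ⊆ nearest S y :=
  fun p hp => ⟨hp.1, fun q hq => by rw [dist_comm, h p hp.1, dist_comm, h q hq]⟩

lemma eq_of_mem_vtx_of_nearest_subset (hx : x ∈ vtx S) (h : nearest S x ⊆ nearest S y) :
    x = y := by
  obtain ⟨a, ha⟩ : (nearest S x).Nonempty := by
    rw [← encard_pos]; exact lt_of_lt_of_le (by decide) hx
  refine eq_of_forall_dist_eq_of_three_le_encard finrank_euclideanSpace_fin hx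
    (r₁ := dist a x) (r₂ := dist a y) (fun p hp => ?_) (fun p hp => ?_)
  · rw [dist_comm, dist_eq_of_mem_nearest_s5 hp ha, dist_comm]
  · rw [dist_comm, dist_eq_of_mem_nearest_s5 (h hp) (h ha), dist_comm]

lemma nearest_ne_self_of_mem_vtx (hy : y ∈ vtx S) (hxy : x ≠ y) : nearest S x ≠ S :=
  fun h => hxy (eq_of_mem_vtx_of_nearest_subset hy (by rw [h]; exact nearest_subset S y)).symm

lemma vtx_eq_empty_of_encard_le_two (hS : S.encard ≤ 2) : vtx S = ∅ := by
  refine eq_empty_of_forall_notMem fun x hx => ?_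
  have : (3 : ℕ∞) ≤ 2 :=
    (show 3 ≤ (nearest S x).encard from hx).trans ((encard_le_encard (nearest_subset S x)).trans hS)
  exact absurd this (by decide)

lemma nearest_eq_self_of_encard_le_three (hS : S.encard ≤ 3) (hx : x ∈ vtx S) : nearest S x = S :=
  ((finite_of_encard_le_coe hS).subset (nearest_subset S x)).eq_of_subset_of_encard_le
    (nearest_subset S x) (hS.trans hx)

lemma encard_vtx_le_one_of_encard_le_three (hS : S.encard ≤ 3) : (vtx S).encard ≤ 1 :=
  encard_le_one_iff.2 fun _ _ hx hy => by_contra fun hxy =>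
    nearest_ne_self_of_mem_vtx hy hxy (nearest_eq_self_of_encard_le_three hS hx)

lemma exists_diff_nearest_eq_singleton (hS : S.encard ≤ 4) (hx : x ∈ vtx S)
    (hne : nearest S x ≠ S) : ∃ m, S \ nearest S x = {m} := by
  have hsum := encard_sdiff_add_encard_of_subset (nearest_subset S x)
  have hle : (S \ nearest S x).encard ≤ 1 := by
    refine (ENat.add_le_add_iff_right (k := 3) (by decide)).1 ?_
    calc (S \ nearest S x).encard + 3 ≤ (S \ nearest S x).encard + (nearest S x).encard :=
          add_le_add_right hx _
      _ = S.encard := hsum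
      _ ≤ 1 + 3 := hS
  rcases encard_le_one_iff_eq.1 hle with h | h
  · exact absurd ((nearest_subset S x).antisymm (sdiff_eq_empty.1 h)) hne
  · exact h

lemma exists_injective_nearest_eq_diff_singleton (hS : S.encard ≤ 4) (hV : 1 < (vtx S).encard) :
    ∃ m : vtx S → Plane, Function.Injective m ∧ ∀ x, m x ∈ S ∧ nearest S x = S \ {m x} := by
  have hne : ∀ x ∈ vtx S, nearest S x ≠ S := fun x _ =>
    let ⟨_, hy, hyx⟩ := exists_ne_of_one_lt_encard hV x
    nearest_ne_self_of_mem_vtx hy hyx.symm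
  choose m hm using fun x : vtx S => exists_diff_nearest_eq_singleton hS x.2 (hne x x.2)
  have hmS : ∀ x : vtx S, m x ∈ S := fun x => ((hm x).symm.subset (mem_singleton (m x))).1
  have hN : ∀ x : vtx S, nearest S x = S \ {m x} := fun x => by
    rw [← hm x, sdiff_sdiff_cancel_left (nearest_subset S x)]
  refine ⟨m, fun x y hxy => Subtype.ext (eq_of_mem_vtx_of_nearest_subset x.2 ?_),
    fun x => ⟨hmS x, hN x⟩⟩
  rw [hN, hN, hxy]

lemma cospherical_of_encard_le_four_of_three_lt_encard_vtx (hS : S.encard ≤ 4)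
    (hV : 3 < (vtx S).encard) : Cospherical S := by
  obtain ⟨m, hinj, hm⟩ := exists_injective_nearest_eq_diff_singleton hS (lt_trans (by decide) hV)
  have hsub : range m ⊆ S := range_subset_iff.2 fun x => (hm x).1
  have hcard : (vtx S).encard ≤ (range m).encard := hinj.encard_range
  have hrange : range m = S :=
    ((finite_of_encard_le_coe hS).subset hsub).eq_of_subset_of_encard_le hsub
      (hS.trans ((Order.add_one_le_of_lt hV).trans hcard))
  have : Finite (vtx S) :=
    (finite_of_encard_le_coe (hcard.trans ((encard_le_encard hsub).trans hS))).to_subtype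
  have hmem : ∀ x y : vtx S, x ≠ y → m y ∈ nearest S x := fun x y hxy => by
    rw [(hm x).2]
    exact ⟨(hm y).1, fun h => hxy (hinj (mem_singleton_iff.1 h)).symm⟩
  have hmiss : ∀ x : vtx S, m x ∈ S \ nearest S x := fun x => by
    rw [(hm x).2]
    exact ⟨(hm x).1, fun h => h.2 rfl⟩
  rw [← hrange]
  exact cospherical_range_of_dist_sq_eq_of_ne Subtype.val m
    (fun x => Metric.infDist (x : Plane) S ^ 2)
    (fun x y hxy => by rw [dist_eq_infDist_of_mem_nearest (hmem x y hxy)])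
    (fun x => pow_lt_pow_left₀ (infDist_lt_dist_of_mem_diff_nearest (hmiss x))
      Metric.infDist_nonneg two_ne_zero)

lemma encard_vtx_le_three_of_encard_le_four (hS : S.encard ≤ 4) : (vtx S).encard ≤ 3 := by
  by_contra! hV
  obtain ⟨o, R, ho⟩ := cospherical_of_encard_le_four_of_three_lt_encard_vtx hS hV
  obtain ⟨x, y, hx, hy, hxy⟩ := one_lt_encard_iff.1 (lt_trans (by decide) hV)
  have hsub : ∀ z, nearest S z ⊆ nearest S o := fun _ => nearest_subset_nearest_of_forall_dist_eq ho
  exact hxy ((eq_of_mem_vtx_of_nearest_subset hx (hsub x)).trans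
    (eq_of_mem_vtx_of_nearest_subset hy (hsub y)).symm)

end Voronoi

theorem small_sets_die (P : Set Plane) (hP : P.Finite) (h : P.ncard < 5) :
    ∃ n : ℕ, 1 ≤ n ∧ vtx^[n] P = ∅ := by
  have hP4 : P.encard ≤ 4 := by
    rw [← hP.cast_ncard_eq]
    exact_mod_cast Nat.le_of_lt_succ h
  have hV1 : (vtx (vtx P)).encard ≤ 2 :=
    (encard_vtx_le_one_of_encard_le_three (encard_vtx_le_three_of_encard_le_four hP4)).trans
      (by decide)
  exact ⟨3, by norm_num, vtx_eq_empty_of_encard_le_two hV1⟩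
end
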